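/- arXiv:2005.02221 — 2 statements merged into one kernel-verified Lean document; each statement's English description precedes it below -/
import Mathlib

section
/- Let (Π,α,l) : I → ℝ³ × ℝ × ℝ be differentiable on an open interval I and solve the reduced spacecraft–rotor equations with coincident centers: Π′(t) = Π(t) × Ω(Π(t),l(t)), α′(t) = −(Π₃(t) − l(t))/Ī₃ + l(t)/J₃, l′(t) = 0. Then for every continuously differentiable F : ℝ³ × ℝ × ℝ → ℝ, the derivative d/dt F(Π(t),α(t),l(t)) equals {F, H}₋(Π(t),α(t),l(t)) for all t ∈ I, where H(Π,α,l) = (1/2)[Π₁²/Ī₁ + Π₂²/Ī₂ + (Π₃ − l)²/Ī₃ + l²/J₃] (independent of α). That is, the reduced equations are Hamiltonian with respect to the minus Lie–Poisson bracket. -/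
open Matrix

/-- The body angular velocity `Ω(Π,l) = (Π₁/Ī₁, Π₂/Ī₂, (Π₃ − l)/Ī₃)`. -/
noncomputable def Om (I1 I2 I3 : ℝ) (P : Fin 3 → ℝ) (l : ℝ) : Fin 3 → ℝ :=
  ![P 0 / I1, P 1 / I2, (P 2 - l) / I3]

/-- Gradient in the `Π`-variables of a function on `𝔰𝔬*(3) × ℝ × ℝ* ≅ ℝ³ × ℝ × ℝ`. -/
noncomputable def gradPi (F : (Fin 3 → ℝ) × ℝ × ℝ → ℝ) (p : (Fin 3 → ℝ) × ℝ × ℝ) :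
    Fin 3 → ℝ :=
  fun i => fderiv ℝ F p (Pi.single i 1, 0, 0)

/-- Partial derivative with respect to `α`. -/
noncomputable def dAlpha (F : (Fin 3 → ℝ) × ℝ × ℝ → ℝ) (p : (Fin 3 → ℝ) × ℝ × ℝ) : ℝ :=
  fderiv ℝ F p (0, 1, 0)

/-- Partial derivative with respect to `l`. -/
noncomputable def dEll (F : (Fin 3 → ℝ) × ℝ × ℝ → ℝ) (p : (Fin 3 → ℝ) × ℝ × ℝ) : ℝ :=
  fderiv ℝ F p (0, 0, 1)

/-- The minus Lie–Poisson bracket on `𝔰𝔬*(3) × ℝ × ℝ*`. -/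
noncomputable def bracket (F K : (Fin 3 → ℝ) × ℝ × ℝ → ℝ)
    (p : (Fin 3 → ℝ) × ℝ × ℝ) : ℝ :=
  -(p.1 ⬝ᵥ crossProduct (gradPi F p) (gradPi K p))
    + dAlpha F p * dEll K p - dAlpha K p * dEll F p

/-- Reduced Hamiltonian of the spacecraft–rotor system with coincident centers,
viewed as a function of `(Π,α,l)` (independent of `α`). -/
noncomputable def Ham (I1 I2 I3 J3 : ℝ) (p : (Fin 3 → ℝ) × ℝ × ℝ) : ℝ :=
  (1/2) * ((p.1 0)^2 / I1 + (p.1 1)^2 / I2 + (p.1 2 - p.2.2)^2 / I3 + p.2.2^2 / J3)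

/-!
By the chain rule, `d/dt F = ∇_Π F · Π' + (∂F/∂α) α' + (∂F/∂l) l'`. For the rotor Hamiltonian
`∇_Π H = Ω`, `∂H/∂α = 0` and `∂H/∂l = -(Π₃ - l)/Ī₃ + l/J₃`, so along a solution this is
`∇_Π F · (Π × Ω) + (∂F/∂α)(∂H/∂l) - (∂H/∂α)(∂F/∂l)`, and the cyclic symmetry of the triple product,
`∇_Π F · (Π × Ω) = -Π · (∇_Π F × Ω)`, turns it into `{F, H}₋`.
-/

theorem fderiv_apply_eq_gradPi_dotProduct_add (F : (Fin 3 → ℝ) × ℝ × ℝ → ℝ)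
    (p w : (Fin 3 → ℝ) × ℝ × ℝ) :
    fderiv ℝ F p w = gradPi F p ⬝ᵥ w.1 + dAlpha F p * w.2.1 + dEll F p * w.2.2 := by
  obtain ⟨v, a, c⟩ := w
  have hw : ((v, a, c) : (Fin 3 → ℝ) × ℝ × ℝ) =
      ∑ i, v i • ((Pi.single i 1 : Fin 3 → ℝ), (0 : ℝ), (0 : ℝ))
        + a • (0, 1, 0) + c • (0, 0, 1) := by
    ext <;> simp [Prod.fst_sum, Prod.snd_sum, Pi.single_apply]
  conv_lhs => rw [hw]
  simp only [map_add, map_sum, map_smul, smul_eq_mul]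
  simp [gradPi, dAlpha, dEll, dotProduct, mul_comm]

theorem fderiv_ham_apply (I1 I2 I3 J3 : ℝ) (p q : (Fin 3 → ℝ) × ℝ × ℝ) :
    fderiv ℝ (Ham I1 I2 I3 J3) p q = p.1 0 / I1 * q.1 0 + p.1 1 / I2 * q.1 1
      + (p.1 2 - p.2.2) / I3 * (q.1 2 - q.2.2) + p.2.2 / J3 * q.2.2 := by
  have hx (i : Fin 3) := (hasFDerivAt_apply (𝕜 := ℝ) i p.1).comp p hasFDerivAt_fst
  have hl := (hasFDerivAt_snd (𝕜 := ℝ) (p := p.2)).comp p hasFDerivAt_snd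
  have hsum := ((((hx 0).pow 2).mul_const I1⁻¹).add (((hx 1).pow 2).mul_const I2⁻¹)).add
    ((((hx 2).sub hl).pow 2).mul_const I3⁻¹) |>.add ((hl.pow 2).mul_const J3⁻¹)
  have hHam := (hsum.const_mul (1 / 2 : ℝ)).congr_of_eventuallyEq (f₁ := Ham I1 I2 I3 J3)
    (.of_forall fun _ => by simp [Ham, div_eq_mul_inv])
  rw [hHam.fderiv]
  simp only [one_div, Fin.isValue, Function.comp_apply, Nat.add_one_sub_one, pow_one,
    nsmul_eq_mul, Nat.cast_ofNat, Pi.sub_apply, smul_add, _root_.add_apply, _root_.smul_apply,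
    ContinuousLinearMap.comp_apply, ContinuousLinearMap.coe_fst', ContinuousLinearMap.proj_apply,
    smul_eq_mul, _root_.sub_apply, ContinuousLinearMap.coe_snd']
  ring

section RotorHamiltonian

variable (I1 I2 I3 J3 : ℝ) (p : (Fin 3 → ℝ) × ℝ × ℝ)

theorem gradPi_ham : gradPi (Ham I1 I2 I3 J3) p = Om I1 I2 I3 p.1 p.2.2 := by
  funext i
  fin_cases i <;> simp [gradPi, fderiv_ham_apply, Om]

theorem dAlpha_ham : dAlpha (Ham I1 I2 I3 J3) p = 0 := by
  simp [dAlpha, fderiv_ham_apply]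

theorem dEll_ham : dEll (Ham I1 I2 I3 J3) p = -(p.1 2 - p.2.2) / I3 + p.2.2 / J3 := by
  simp only [dEll, fderiv_ham_apply, Pi.zero_apply, mul_zero, add_zero, zero_sub, mul_neg, mul_one,
    zero_add]
  ring

theorem bracket_ham (F : (Fin 3 → ℝ) × ℝ × ℝ → ℝ) :
    bracket F (Ham I1 I2 I3 J3) p = gradPi F p ⬝ᵥ (p.1 ⨯₃ Om I1 I2 I3 p.1 p.2.2)
      + dAlpha F p * (-(p.1 2 - p.2.2) / I3 + p.2.2 / J3) := by
  rw [bracket, gradPi_ham, dAlpha_ham, dEll_ham, triple_product_permutation, ← cross_anticomm,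
    dotProduct_neg]
  ring

end RotorHamiltonian

theorem reduced_equations_hamiltonian_general
    (I1 I2 I3 J3 : ℝ)
    (a b : ℝ) (P : ℝ → Fin 3 → ℝ) (α l : ℝ → ℝ)
    (hP : ∀ t ∈ Set.Ioo a b,
      HasDerivAt P (crossProduct (P t) (Om I1 I2 I3 (P t) (l t))) t)
    (hα : ∀ t ∈ Set.Ioo a b,
      HasDerivAt α (-(P t 2 - l t) / I3 + l t / J3) t)
    (hl : ∀ t ∈ Set.Ioo a b, HasDerivAt l 0 t) :
    ∀ F : (Fin 3 → ℝ) × ℝ × ℝ → ℝ, ContDiff ℝ 1 F →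
      ∀ t ∈ Set.Ioo a b,
        HasDerivAt (fun s => F (P s, α s, l s))
          (bracket F (Ham I1 I2 I3 J3) (P t, α t, l t)) t := by
  intro F hF t ht
  have hcurve := (hP t ht).prodMk ((hα t ht).prodMk (hl t ht))
  have hF' := ((hF.differentiable one_ne_zero) _).hasFDerivAt.comp_hasDerivAt t hcurve
  refine hF'.congr_deriv ?_
  rw [fderiv_apply_eq_gradPi_dotProduct_add, bracket_ham]
  simp

/-- Along any solution of the reduced spacecraft–rotor equations with coincident
centers, every `C¹` function `F` evolves by `d/dt F = {F, H}₋`: the reduced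
equations are Hamiltonian with respect to the minus Lie–Poisson bracket. -/
theorem reduced_equations_hamiltonian
    (I1 I2 I3 J3 : ℝ) (hI1 : 0 < I1) (hI2 : 0 < I2) (hI3 : 0 < I3) (hJ3 : 0 < J3)
    (a b : ℝ) (P : ℝ → Fin 3 → ℝ) (α l : ℝ → ℝ)
    (hP : ∀ t ∈ Set.Ioo a b,
      HasDerivAt P (crossProduct (P t) (Om I1 I2 I3 (P t) (l t))) t)
    (hα : ∀ t ∈ Set.Ioo a b,
      HasDerivAt α (-(P t 2 - l t) / I3 + l t / J3) t)
    (hl : ∀ t ∈ Set.Ioo a b, HasDerivAt l 0 t) :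
    ∀ F : (Fin 3 → ℝ) × ℝ × ℝ → ℝ, ContDiff ℝ 1 F →
      ∀ t ∈ Set.Ioo a b,
        HasDerivAt (fun s => F (P s, α s, l s))
          (bracket F (Ham I1 I2 I3 J3) (P t, α t, l t)) t :=
  reduced_equations_hamiltonian_general I1 I2 I3 J3 a b P α l hP hα hl
end

section
/- Let (Π,Γ,α,l) : I → ℝ³ × ℝ³ × ℝ × ℝ be differentiable on an open interval I and solve the reduced spacecraft–rotor equations with non-coincident centers: Π′(t) = Π(t) × Ω(Π(t),l(t)) + g·h·(Γ(t) × χ), Γ′(t) = Γ(t) × Ω(Π(t),l(t)), α′(t) = −(Π₃(t) − l(t))/Ī₃ + l(t)/J₃, l′(t) = 0. Then the Hamiltonian t ↦ H(Π(t),Γ(t),l(t)) = (1/2)[Π₁(t)²/Ī₁ + Π₂(t)²/Ī₂ + (Π₃(t) − l(t))²/Ī₃ + l(t)²/J₃] + g·h·(Γ(t) · χ) is constant on I. -/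
/-!
The kinetic part of `H` has gradient `Ω` in `Π` and `l` is constant, so along a solution its rate
of change is `Ω · Π' = g h Ω · (Γ × χ)`, the gyroscopic term `Π × Ω` doing no work. The potential
part changes at the rate `g h (Γ × Ω) · χ`. By the cyclic symmetry of the scalar triple product
the two rates cancel, so `H` has zero derivative on the interval.
-/

open Matrix

noncomputable def kineticEnergy (I1 I2 I3 J3 : ℝ) (P : Fin 3 → ℝ) (l : ℝ) : ℝ :=
  (1/2) * (P 0 ^ 2 / I1 + P 1 ^ 2 / I2 + (P 2 - l) ^ 2 / I3 + l ^ 2 / J3)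

noncomputable def hamiltonian (I1 I2 I3 J3 g h : ℝ) (χ P Γ : Fin 3 → ℝ) (l : ℝ) : ℝ :=
  kineticEnergy I1 I2 I3 J3 P l + g * h * (Γ ⬝ᵥ χ)

theorem dot_cross_add_cross_dot_eq_zero {R : Type*} [CommRing R] (u v w : Fin 3 → R) :
    u ⬝ᵥ (v ⨯₃ w) + (v ⨯₃ u) ⬝ᵥ w = 0 := by
  rw [dotProduct_comm (v ⨯₃ u), triple_product_permutation u, triple_product_permutation w,
    ← cross_anticomm w, dotProduct_neg, add_neg_cancel]

theorem HasDerivAt.dotProduct_const {𝕜 ι : Type*} [NontriviallyNormedField 𝕜] [Fintype ι]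
    {Γ : 𝕜 → ι → 𝕜} {Γ' : ι → 𝕜} {t : 𝕜} (hΓ : HasDerivAt Γ Γ' t) (χ : ι → 𝕜) :
    HasDerivAt (fun t => Γ t ⬝ᵥ χ) (Γ' ⬝ᵥ χ) t := by
  simp only [dotProduct]
  exact HasDerivAt.fun_sum fun i _ => (hasDerivAt_pi.1 hΓ i).mul_const (χ i)

theorem HasDerivAt.kineticEnergy (I1 I2 I3 J3 : ℝ) {P : ℝ → Fin 3 → ℝ} {l : ℝ → ℝ}
    {P' : Fin 3 → ℝ} {l' t : ℝ} (hP : HasDerivAt P P' t) (hl : HasDerivAt l l' t) :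
    HasDerivAt (fun t => kineticEnergy I1 I2 I3 J3 (P t) (l t))
      (Om I1 I2 I3 (P t) (l t) ⬝ᵥ P' + (l t / J3 - (P t 2 - l t) / I3) * l') t := by
  have hPi := hasDerivAt_pi.1 hP
  have hsum := (((((hPi 0).fun_pow 2).div_const I1).add (((hPi 1).fun_pow 2).div_const I2)).add
    ((((hPi 2).sub hl).fun_pow 2).div_const I3)).add ((hl.fun_pow 2).div_const J3)
  refine (hsum.const_mul (1/2)).congr_deriv ?_
  simp only [Om, vec3_dotProduct, cons_val_zero, cons_val_one, cons_val_two, tail_cons,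
    head_cons, Pi.sub_apply]
  ring

theorem HasDerivAt.hamiltonian_eq_zero (I1 I2 I3 J3 g h : ℝ) (χ : Fin 3 → ℝ)
    {P Γ : ℝ → Fin 3 → ℝ} {l : ℝ → ℝ} {t : ℝ}
    (hP : HasDerivAt P (P t ⨯₃ Om I1 I2 I3 (P t) (l t) + (g * h) • Γ t ⨯₃ χ) t)
    (hΓ : HasDerivAt Γ (Γ t ⨯₃ Om I1 I2 I3 (P t) (l t)) t) (hl : HasDerivAt l 0 t) :
    HasDerivAt (fun t => hamiltonian I1 I2 I3 J3 g h χ (P t) (Γ t) (l t)) 0 t := by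
  refine ((hP.kineticEnergy I1 I2 I3 J3 hl).add
    ((hΓ.dotProduct_const χ).const_mul (g * h))).congr_deriv ?_
  rw [mul_zero, add_zero, dotProduct_add, dot_cross_self, zero_add, dotProduct_smul, smul_eq_mul,
    ← mul_add, dot_cross_add_cross_dot_eq_zero, mul_zero]

theorem hamiltonian_conserved_noncoincident_general
    (I1 I2 I3 J3 : ℝ)
    (g h : ℝ) (χ : Fin 3 → ℝ)
    (a b : ℝ) (P Γ : ℝ → Fin 3 → ℝ) (l : ℝ → ℝ)
    (hP : ∀ t ∈ Set.Ioo a b,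
      HasDerivAt P (crossProduct (P t) (Om I1 I2 I3 (P t) (l t))
        + (g * h) • crossProduct (Γ t) χ) t)
    (hΓ : ∀ t ∈ Set.Ioo a b,
      HasDerivAt Γ (crossProduct (Γ t) (Om I1 I2 I3 (P t) (l t))) t)
    (hl : ∀ t ∈ Set.Ioo a b, HasDerivAt l 0 t) :
    ∀ s ∈ Set.Ioo a b, ∀ t ∈ Set.Ioo a b,
      (1/2) * ((P s 0)^2 / I1 + (P s 1)^2 / I2 + (P s 2 - l s)^2 / I3
          + (l s)^2 / J3) + g * h * (Γ s ⬝ᵥ χ)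
        = (1/2) * ((P t 0)^2 / I1 + (P t 1)^2 / I2 + (P t 2 - l t)^2 / I3
            + (l t)^2 / J3) + g * h * (Γ t ⬝ᵥ χ) := by
  intro s hs t ht
  have hH : ∀ τ ∈ Set.Ioo a b,
      HasDerivAt (fun τ => hamiltonian I1 I2 I3 J3 g h χ (P τ) (Γ τ) (l τ)) 0 τ := fun τ hτ =>
    .hamiltonian_eq_zero I1 I2 I3 J3 g h χ (hP τ hτ) (hΓ τ hτ) (hl τ hτ)
  exact isOpen_Ioo.is_const_of_deriv_eq_zero isPreconnected_Ioo
    (fun τ hτ => (hH τ hτ).differentiableAt.differentiableWithinAt)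
    (fun τ hτ => (hH τ hτ).deriv) hs ht

/-- Along any solution of the reduced spacecraft–rotor equations with non-coincident
centers of buoyancy and gravity, the Hamiltonian `H(Π,Γ,l)` is constant. -/
theorem hamiltonian_conserved_noncoincident
    (I1 I2 I3 J3 : ℝ) (hI1 : 0 < I1) (hI2 : 0 < I2) (hI3 : 0 < I3) (hJ3 : 0 < J3)
    (g h : ℝ) (χ : Fin 3 → ℝ) (hχ : χ ⬝ᵥ χ = 1)
    (a b : ℝ) (P Γ : ℝ → Fin 3 → ℝ) (α l : ℝ → ℝ)
    (hP : ∀ t ∈ Set.Ioo a b,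
      HasDerivAt P (crossProduct (P t) (Om I1 I2 I3 (P t) (l t))
        + (g * h) • crossProduct (Γ t) χ) t)
    (hΓ : ∀ t ∈ Set.Ioo a b,
      HasDerivAt Γ (crossProduct (Γ t) (Om I1 I2 I3 (P t) (l t))) t)
    (hα : ∀ t ∈ Set.Ioo a b,
      HasDerivAt α (-(P t 2 - l t) / I3 + l t / J3) t)
    (hl : ∀ t ∈ Set.Ioo a b, HasDerivAt l 0 t) :
    ∀ s ∈ Set.Ioo a b, ∀ t ∈ Set.Ioo a b,
      (1/2) * ((P s 0)^2 / I1 + (P s 1)^2 / I2 + (P s 2 - l s)^2 / I3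
          + (l s)^2 / J3) + g * h * (Γ s ⬝ᵥ χ)
        = (1/2) * ((P t 0)^2 / I1 + (P t 1)^2 / I2 + (P t 2 - l t)^2 / I3
            + (l t)^2 / J3) + g * h * (Γ t ⬝ᵥ χ) :=
  hamiltonian_conserved_noncoincident_general I1 I2 I3 J3 g h χ a b P Γ l hP hΓ hl
end
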